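/- Let K be a field of characteristic 0, and let n ≥ 2, r ≥ 1. For i ∈ I(n,r−1) and z ∈ ℤ, let i⌢z ∈ I(ℤ,r) denote the r-tuple obtained by appending z to i. Then the unital K-subalgebra of End_K(Ẽ^{⊗r}) generated by the set Y = {ξ_{i⌢s, i⌢t} : i ∈ I(n,r−1), s ∈ {1,…,n}, t ∈ ℤ} equals the centralizer algebra End_{KΣ̂_r}(Ẽ^{⊗r}). -/
import Mathlib


noncomputable section

namespace AffineSchur

variable (K : Type*) [Field K] (n r : ℕ)

/-- The right action of the pair `(σ,ε) ∈ Σ̂_r = Σ_r ⋉ ℤ^r` on `I(ℤ,r)`: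
`i·(σ,ε) = i∘σ + n·ε`. -/
def act (σ : Equiv.Perm (Fin r)) (ε : Fin r → ℤ) (i : Fin r → ℤ) : Fin r → ℤ :=
  fun k => i (σ k) + n * ε k

/-- The tensor space `Ẽ^{⊗r}`: the free `K`-module with basis `(v_i)_{i ∈ I(ℤ,r)}`. -/
abbrev TensorSpace := (Fin r → ℤ) →₀ K

/-- The right-translation operator `T_{σ,ε} : v_i ↦ v_{i·(σ,ε)}`. -/
def transOp (σ : Equiv.Perm (Fin r)) (ε : Fin r → ℤ) :
    Module.End K (TensorSpace K r) :=
  Finsupp.lmapDomain K K (act n r σ ε)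

/-- The finite set `{k : (k,l) lies in the Σ̂_r-orbit of (i,j)}`. -/
def xiSupport (i j l : Fin r → ℤ) : Finset (Fin r → ℤ) := by
  classical
  exact (Finset.univ.filter fun σ : Equiv.Perm (Fin r) =>
      ∀ k, (n : ℤ) ∣ (l k - j (σ k))).image
    fun σ => fun k => i (σ k) + (l k - j (σ k))

/-- The operator `ξ_{i,j} ∈ End_K(Ẽ^{⊗r})` given by
`ξ_{i,j}(v_l) = Σ_{k : (k,l) in the Σ̂_r-orbit of (i,j)} v_k`. -/
def xi (i j : Fin r → ℤ) : Module.End K (TensorSpace K r) :=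
  Finsupp.lsum K fun l => LinearMap.toSpanSingleton K _
    (∑ k ∈ xiSupport n r i j l, Finsupp.single k (1 : K))

/-- The centralizer algebra `End_{KΣ̂_r}(Ẽ^{⊗r})` of all the translation operators
`T_{σ,ε}` inside `End_K(Ẽ^{⊗r})` — the affine Schur algebra `S̃(n,r)`. -/
def affineSchur : Subalgebra K (Module.End K (TensorSpace K r)) :=
  Subalgebra.centralizer K
    (Set.range fun p : Equiv.Perm (Fin r) × (Fin r → ℤ) => transOp K n r p.1 p.2)


/-- Appending an integer z to a tuple i ∈ I(ℤ,r−1), giving a tuple in I(ℤ,r)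
(z is placed at the last position). -/
def app (i : Fin (r - 1) → ℤ) (z : ℤ) : Fin r → ℤ :=
  fun k => if h : (k : ℕ) < r - 1 then i ⟨k, h⟩ else z

/-! ### Auxiliary lemmas -/

section Aux

variable {n r : ℕ}

lemma act_act (σ τ : Equiv.Perm (Fin r)) (ε δ x) :
    act n r σ ε (act n r τ δ x) = act n r (σ.trans τ) (fun k => δ (σ k) + ε k) x := by
  funext k; simp only [act, Equiv.trans_apply]; ring

/-- the inverse translation part -/
def invε (σ : Equiv.Perm (Fin r)) (ε : Fin r → ℤ) : Fin r → ℤ := fun k => - ε (σ.symm k)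

lemma act_inv_act (σ : Equiv.Perm (Fin r)) (ε x) :
    act n r σ.symm (invε σ ε) (act n r σ ε x) = x := by
  funext k; simp [act, invε]

lemma act_act_inv (σ : Equiv.Perm (Fin r)) (ε x) :
    act n r σ ε (act n r σ.symm (invε σ ε) x) = x := by
  funext k; simp [act, invε]

lemma act_injective (σ : Equiv.Perm (Fin r)) (ε) : Function.Injective (act n r σ ε) :=
  Function.LeftInverse.injective (g := act n r σ.symm (invε σ ε)) (act_inv_act σ ε)

/-- simultaneous orbit relation on pairs -/
def pairRel (n r : ℕ) (i j k l : Fin r → ℤ) : Prop :=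
  ∃ σ ε, k = act n r σ ε i ∧ l = act n r σ ε j

lemma pairRel_refl (i j : Fin r → ℤ) : pairRel n r i j i j :=
  ⟨1, 0, by funext k; simp [act], by funext k; simp [act]⟩

lemma pairRel_symm {i j k l : Fin r → ℤ} (h : pairRel n r i j k l) : pairRel n r k l i j := by
  obtain ⟨σ, ε, hk, hl⟩ := h
  exact ⟨σ.symm, invε σ ε, by rw [hk, act_inv_act], by rw [hl, act_inv_act]⟩

lemma pairRel_trans {i j k l u v : Fin r → ℤ} (h : pairRel n r i j k l)
    (h' : pairRel n r k l u v) : pairRel n r i j u v := by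
  obtain ⟨σ, ε, hk, hl⟩ := h
  obtain ⟨τ, δ, hu, hv⟩ := h'
  exact ⟨τ.trans σ, fun m => ε (τ m) + δ m, by rw [hu, hk, act_act],
    by rw [hv, hl, act_act]⟩

lemma mem_xiSupport_iff {i j l k : Fin r → ℤ} :
    k ∈ xiSupport n r i j l ↔ ∃ σ ε, k = act n r σ ε i ∧ l = act n r σ ε j := by
  unfold xiSupport
  simp only [Finset.mem_image, Finset.mem_filter, Finset.mem_univ, true_and]
  constructor
  · rintro ⟨σ, hdvd, rfl⟩
    refine ⟨σ, fun m => (l m - j (σ m)) / n, funext fun m => ?_, funext fun m => ?_⟩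
    · simp only [act]
      rw [Int.mul_ediv_cancel' (hdvd m)]
    · simp only [act]
      rw [Int.mul_ediv_cancel' (hdvd m)]; ring
  · rintro ⟨σ, ε, rfl, rfl⟩
    refine ⟨σ, fun m => ⟨ε m, by simp [act]⟩, funext fun m => ?_⟩
    simp [act]

lemma mem_xiSupport_iff_pairRel {i j l k : Fin r → ℤ} :
    k ∈ xiSupport n r i j l ↔ pairRel n r i j k l := mem_xiSupport_iff

lemma self_mem_xiSupport (i j : Fin r → ℤ) : i ∈ xiSupport n r i j j :=
  mem_xiSupport_iff_pairRel.2 (pairRel_refl i j)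

lemma xiSupport_act (i j : Fin r → ℤ) (σ ε) (l) :
    xiSupport n r i j (act n r σ ε l) = (xiSupport n r i j l).image (act n r σ ε) := by
  ext k
  simp only [Finset.mem_image, mem_xiSupport_iff]
  constructor
  · rintro ⟨τ, δ, rfl, hl⟩
    refine ⟨act n r σ.symm (invε σ ε) (act n r τ δ i),
      ⟨σ.symm.trans τ, fun m => δ (σ.symm m) + invε σ ε m, act_act _ _ _ _ _, ?_⟩,
      act_act_inv σ ε (act n r τ δ i)⟩
    rw [← act_act, ← hl, act_inv_act]
  · rintro ⟨k₀, ⟨τ, δ, rfl, rfl⟩, rfl⟩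
    exact ⟨σ.trans τ, fun m => δ (σ m) + ε m, act_act _ _ _ _ _, act_act _ _ _ _ _⟩

lemma xiSupport_act_pair (i j : Fin r → ℤ) (σ ε) (l) :
    xiSupport n r (act n r σ ε i) (act n r σ ε j) l = xiSupport n r i j l := by
  ext k
  simp only [mem_xiSupport_iff]
  constructor
  · rintro ⟨τ, δ, rfl, rfl⟩
    exact ⟨τ.trans σ, fun m => ε (τ m) + δ m, act_act _ _ _ _ _, act_act _ _ _ _ _⟩
  · rintro ⟨τ, δ, rfl, rfl⟩
    refine ⟨τ.trans σ.symm, fun m => δ m - ε (σ.symm (τ m)), ?_, ?_⟩ <;>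
      · funext m; simp only [act, Equiv.trans_apply, Equiv.apply_symm_apply]; ring

end Aux

section Aux2

variable {K : Type*} [Field K] {n r : ℕ}

lemma sum_single_apply (S : Finset (Fin r → ℤ)) (k : Fin r → ℤ) :
    (∑ x ∈ S, Finsupp.single x (1:K)) k = if k ∈ S then 1 else 0 := by
  classical
  rw [Finset.sum_apply']
  simp [Finsupp.single_apply]

lemma xi_single (i j l : Fin r → ℤ) (c : K) :
    xi K n r i j (Finsupp.single l c)
      = c • ∑ k ∈ xiSupport n r i j l, Finsupp.single k (1:K) := by
  simp [xi, Finsupp.lsum_single]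

lemma xi_single_apply (i j l k : Fin r → ℤ) :
    (xi K n r i j (Finsupp.single l (1:K))) k
      = if k ∈ xiSupport n r i j l then 1 else 0 := by
  rw [xi_single, one_smul, sum_single_apply]

lemma transOp_single (σ : Equiv.Perm (Fin r)) (ε : Fin r → ℤ) (l : Fin r → ℤ) (c : K) :
    transOp K n r σ ε (Finsupp.single l c) = Finsupp.single (act n r σ ε l) c := by
  simp [transOp, Finsupp.mapDomain_single]

lemma xi_comm_transOp (i j : Fin r → ℤ) (σ : Equiv.Perm (Fin r)) (ε : Fin r → ℤ) :
    transOp K n r σ ε * xi K n r i j = xi K n r i j * transOp K n r σ ε := by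
  apply Finsupp.lhom_ext
  intro l c
  rw [Module.End.mul_apply, Module.End.mul_apply, xi_single, transOp_single, xi_single,
    map_smul, map_sum, xiSupport_act,
    Finset.sum_image (fun x _ y _ h => act_injective σ ε h)]
  simp [transOp_single]

lemma xi_mem_affineSchur (i j : Fin r → ℤ) : xi K n r i j ∈ affineSchur K n r := by
  rw [affineSchur, Subalgebra.mem_centralizer_iff]
  rintro g ⟨⟨σ, ε⟩, rfl⟩
  exact xi_comm_transOp i j σ ε

lemma xi_act_pair (σ : Equiv.Perm (Fin r)) (ε : Fin r → ℤ) (i j : Fin r → ℤ) :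
    xi K n r (act n r σ ε i) (act n r σ ε j) = xi K n r i j := by
  unfold xi
  congr 1
  funext l
  rw [xiSupport_act_pair]

lemma xi_eq_of_pairRel {i j i' j' : Fin r → ℤ} (h : pairRel n r i j i' j') :
    xi K n r i' j' = xi K n r i j := by
  obtain ⟨σ, ε, rfl, rfl⟩ := h
  exact xi_act_pair σ ε i j

end Aux2

section Decomp

variable {n r : ℕ}

/-- orbit equivalence on `I(ℤ,r)` -/
def sd (n r : ℕ) : Setoid (Fin r → ℤ) where
  r x y := ∃ σ ε, y = act n r σ ε x
  iseqv := by
    constructor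
    · intro x; exact ⟨1, 0, by funext k; simp [act]⟩
    · rintro x y ⟨σ, ε, rfl⟩; exact ⟨σ.symm, invε σ ε, (act_inv_act σ ε x).symm⟩
    · rintro x y z ⟨σ, ε, rfl⟩ ⟨τ, δ, rfl⟩
      exact ⟨τ.trans σ, fun k => ε (τ k) + δ k, act_act τ σ δ ε x⟩

/-- canonical representative of a residue in `[1,n]` -/
def cnorm (n : ℕ) (z : ℤ) : ℤ := (z - 1) % n + 1

lemma cnorm_spec (hn : 1 ≤ n) (z : ℤ) :
    (n:ℤ) ∣ (cnorm n z - z) ∧ 1 ≤ cnorm n z ∧ cnorm n z ≤ n := by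
  have h0 : (0:ℤ) < n := by exact_mod_cast hn
  have h1 : 0 ≤ (z - 1) % n := Int.emod_nonneg _ (by positivity)
  have h2 : (z - 1) % n < n := Int.emod_lt_of_pos _ h0
  obtain ⟨c, hc⟩ := Int.dvd_self_sub_of_emod_eq (rfl : (z - 1) % (n:ℤ) = (z - 1) % n)
  exact ⟨⟨-c, by simp only [cnorm, mul_neg]; omega⟩, by simp only [cnorm]; omega,
    by simp only [cnorm]; omega⟩

lemma act_cnorm (hn : 1 ≤ n) (σ : Equiv.Perm (Fin r)) (x : Fin r → ℤ) :
    ∃ ε, act n r σ ε x = fun k => cnorm n (x (σ k)) := by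
  refine ⟨fun k => (cnorm n (x (σ k)) - x (σ k)) / n, funext fun k => ?_⟩
  simp only [act]
  rw [Int.mul_ediv_cancel' (cnorm_spec hn (x (σ k))).1]
  ring

lemma finite_quot (hn : 1 ≤ n) : Finite (Quotient (sd n r)) := by
  apply Finite.of_surjective
    (f := fun v : Fin r → Fin n => Quotient.mk (sd n r) (fun k => ((v k : ℤ) + 1)))
  intro q
  obtain ⟨x, rfl⟩ := Quotient.exists_rep q
  obtain ⟨ε, hε⟩ := act_cnorm hn (1 : Equiv.Perm (Fin r)) x
  have hb : ∀ k, 1 ≤ cnorm n (x k) ∧ cnorm n (x k) ≤ n := fun k => (cnorm_spec hn (x k)).2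
  refine ⟨fun k => ⟨(cnorm n (x k) - 1).toNat, ?_⟩, ?_⟩
  · have := hb k; omega
  · refine Eq.symm (Quot.sound ?_)
    refine ⟨1, ε, ?_⟩
    rw [hε]
    funext k
    have := hb k
    simp only [Equiv.Perm.one_apply]
    omega

lemma xiSupport_eq_empty {i j l : Fin r → ℤ} (h : ¬ ∃ σ ε, l = act n r σ ε j) :
    xiSupport n r i j l = ∅ := by
  ext k
  simp only [mem_xiSupport_iff, Finset.notMem_empty, iff_false]
  rintro ⟨σ, ε, -, hl⟩
  exact h ⟨σ, ε, hl⟩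

end Decomp

section Decomp2

variable {K : Type*} [Field K] {n r : ℕ}

lemma mem_xiSupport_symm {ρ i k : Fin r → ℤ} (h : k ∈ xiSupport n r i ρ ρ) :
    i ∈ xiSupport n r k ρ ρ :=
  mem_xiSupport_iff_pairRel.2 (pairRel_symm (mem_xiSupport_iff_pairRel.1 h))

lemma xiSupport_self_eq {ρ i k : Fin r → ℤ} (h : k ∈ xiSupport n r i ρ ρ) :
    xiSupport n r k ρ ρ = xiSupport n r i ρ ρ := by
  rw [mem_xiSupport_iff_pairRel] at h
  ext x
  simp only [mem_xiSupport_iff_pairRel]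
  exact ⟨fun hx => pairRel_trans h hx, fun hx => pairRel_trans (pairRel_symm h) hx⟩

lemma comm_apply {f : Module.End K (TensorSpace K r)} (hf : f ∈ affineSchur K n r)
    (σ : Equiv.Perm (Fin r)) (ε : Fin r → ℤ) (x : TensorSpace K r) :
    transOp K n r σ ε (f x) = f (transOp K n r σ ε x) := by
  have hc := (Subalgebra.mem_centralizer_iff K).1 hf (transOp K n r σ ε) ⟨(σ, ε), rfl⟩
  calc transOp K n r σ ε (f x) = (transOp K n r σ ε * f) x := rfl
    _ = (f * transOp K n r σ ε) x := by rw [hc]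
    _ = _ := rfl

lemma coeff_invariant {f : Module.End K (TensorSpace K r)} (hf : f ∈ affineSchur K n r)
    {ρ : Fin r → ℤ} {σ : Equiv.Perm (Fin r)} {ε : Fin r → ℤ}
    (hρ : act n r σ ε ρ = ρ) (x : Fin r → ℤ) :
    (f (Finsupp.single ρ (1:K))) (act n r σ ε x) = (f (Finsupp.single ρ 1)) x := by
  have h2 : transOp K n r σ ε (f (Finsupp.single ρ 1)) = f (Finsupp.single ρ 1) := by
    rw [comm_apply hf, transOp_single, hρ]
  conv_lhs => rw [← h2]
  simp only [transOp, Finsupp.lmapDomain_apply]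
  rw [Finsupp.mapDomain_apply (act_injective σ ε)]

/-- canonical decomposition of an element of the centralizer as a finite
linear combination of the `ξ_{i,j}` -/
noncomputable def decomp (K : Type*) [Field K] (n r : ℕ) [Fintype (Quotient (sd n r))]
    (f : Module.End K (TensorSpace K r)) : Module.End K (TensorSpace K r) :=
  ∑ q : Quotient (sd n r), ∑ i' ∈ (f (Finsupp.single (Quotient.out q) 1)).support,
    ((f (Finsupp.single (Quotient.out q) 1)) i'
      / ((xiSupport n r i' (Quotient.out q) (Quotient.out q)).card : K)) •
      xi K n r i' (Quotient.out q)

lemma decomp_mem [Fintype (Quotient (sd n r))] (f : Module.End K (TensorSpace K r)) :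
    decomp K n r f ∈ affineSchur K n r :=
  Subalgebra.sum_mem _ fun q _ => Subalgebra.sum_mem _ fun i' _ =>
    Subalgebra.smul_mem _ (xi_mem_affineSchur _ _) _

lemma decomp_single_out [CharZero K] [Fintype (Quotient (sd n r))]
    {f : Module.End K (TensorSpace K r)} (hf : f ∈ affineSchur K n r)
    (q : Quotient (sd n r)) :
    decomp K n r f (Finsupp.single (Quotient.out q) (1:K))
      = f (Finsupp.single (Quotient.out q) 1) := by
  classical
  rw [decomp, LinearMap.sum_apply]
  rw [Finset.sum_eq_single_of_mem q (Finset.mem_univ q) ?side]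
  case side =>
    intro q' _ hne
    rw [LinearMap.sum_apply]
    apply Finset.sum_eq_zero
    intro i' _
    have hemp : xiSupport n r i' (Quotient.out q') (Quotient.out q) = ∅ := by
      apply xiSupport_eq_empty
      rintro ⟨σ, ε, hl⟩
      exact hne ((Quotient.out_eq q').symm.trans
        ((Quot.sound ⟨σ, ε, hl⟩).trans (Quotient.out_eq q)))
    rw [LinearMap.smul_apply, xi_single, hemp, Finset.sum_empty, smul_zero, smul_zero]
  · rw [LinearMap.sum_apply]
    apply Finsupp.ext
    intro k
    rw [Finsupp.finset_sum_apply]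
    simp only [LinearMap.smul_apply, xi_single, one_smul, Finsupp.smul_apply,
      sum_single_apply, smul_eq_mul, mul_ite, mul_one, mul_zero]
    rw [← Finset.sum_filter]
    have hfilt : ((f (Finsupp.single (Quotient.out q) (1:K))).support.filter
        (fun i' => k ∈ xiSupport n r i' (Quotient.out q) (Quotient.out q)))
        = (f (Finsupp.single (Quotient.out q) (1:K))).support
            ∩ xiSupport n r k (Quotient.out q) (Quotient.out q) := by
      ext i'
      simp only [Finset.mem_filter, Finset.mem_inter, and_congr_right_iff]
      exact fun _ => ⟨mem_xiSupport_symm, mem_xiSupport_symm⟩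
    rw [hfilt]
    have hterm : ∀ i' ∈ (f (Finsupp.single (Quotient.out q) (1:K))).support
        ∩ xiSupport n r k (Quotient.out q) (Quotient.out q),
        (f (Finsupp.single (Quotient.out q) (1:K))) i'
          / ((xiSupport n r i' (Quotient.out q) (Quotient.out q)).card : K)
        = (f (Finsupp.single (Quotient.out q) (1:K))) k
          / ((xiSupport n r k (Quotient.out q) (Quotient.out q)).card : K) := by
      intro i' hi'
      obtain ⟨-, hmem⟩ := Finset.mem_inter.1 hi'
      obtain ⟨σ, ε, hk', hρ⟩ := mem_xiSupport_iff.1 hmem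
      rw [xiSupport_self_eq hmem, hk', coeff_invariant hf hρ.symm]
    rw [Finset.sum_congr rfl hterm, Finset.sum_const, nsmul_eq_mul]
    by_cases hk : (f (Finsupp.single (Quotient.out q) (1:K))) k = 0
    · rw [hk, zero_div, mul_zero]
    · have hsub : xiSupport n r k (Quotient.out q) (Quotient.out q)
          ⊆ (f (Finsupp.single (Quotient.out q) (1:K))).support := by
        intro i' hi'
        obtain ⟨σ, ε, hk', hρ⟩ := mem_xiSupport_iff.1 hi'
        rw [Finsupp.mem_support_iff, hk', coeff_invariant hf hρ.symm]
        exact hk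
      rw [Finset.inter_eq_right.2 hsub]
      have hm : ((xiSupport n r k (Quotient.out q) (Quotient.out q)).card : K) ≠ 0 := by
        rw [Nat.cast_ne_zero]
        exact Finset.card_ne_zero_of_mem (self_mem_xiSupport k (Quotient.out q))
      rw [← mul_div_assoc, mul_div_cancel_left₀ _ hm]

lemma decomp_spec [CharZero K] [Fintype (Quotient (sd n r))]
    {f : Module.End K (TensorSpace K r)} (hf : f ∈ affineSchur K n r) :
    decomp K n r f = f := by
  apply Finsupp.lhom_ext
  intro l c
  have hl1 : Finsupp.single l c = c • Finsupp.single l (1:K) := by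
    rw [Finsupp.smul_single, smul_eq_mul, mul_one]
  rw [hl1, map_smul, map_smul]
  congr 1
  obtain ⟨σ, ε, hl⟩ := Quotient.mk_out (s := sd n r) l
  have hl' : transOp K n r σ ε (Finsupp.single (Quotient.out (Quotient.mk (sd n r) l)) 1)
      = Finsupp.single l (1:K) := by
    rw [transOp_single, ← hl]
  rw [← hl', ← comm_apply (decomp_mem f), ← comm_apply hf, decomp_single_out hf]

end Decomp2

section Key

variable {n r : ℕ}

lemma int_bounded_dvd_eq {x y : ℤ} (hx : 1 ≤ x) (hx2 : x ≤ n) (hy : 1 ≤ y) (hy2 : y ≤ n)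
    (h : (n:ℤ) ∣ x - y) : x = y := by
  obtain ⟨z, hz⟩ := h
  have h1 : (1:ℤ) ≤ n := le_trans hx hx2
  rcases lt_trichotomy z 0 with hzs | hzs | hzs
  · have : (n:ℤ) * z ≤ (n:ℤ) * (-1) := by
      apply mul_le_mul_of_nonneg_left (by omega) (by omega)
    rw [mul_neg_one] at this
    omega
  · rw [hzs, mul_zero] at hz; omega
  · have : (n:ℤ) * 1 ≤ (n:ℤ) * z := by
      apply mul_le_mul_of_nonneg_left (by omega) (by omega)
    rw [mul_one] at this
    omega

lemma key_lemma {L : Fin r} {a b c u m : Fin r → ℤ}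
    (ha : ∀ k, 1 ≤ a k ∧ a k ≤ n)
    (habL : a L = b L)
    (hbc : ∀ k, k ≠ L → b k = c k)
    (hst : a L ≠ c L)
    (hm : m ∈ xiSupport n r b c c) (hu : u ∈ xiSupport n r a b m) :
    pairRel n r a c u c ∨
      (Finset.univ.filter (fun k => u k ≠ c k)).card
        < (Finset.univ.filter (fun k => a k ≠ c k)).card := by
  classical
  obtain ⟨τ, δ, hm1, hc1⟩ := mem_xiSupport_iff.1 hm
  obtain ⟨σ, ε, hu1, hm2⟩ := mem_xiSupport_iff.1 hu
  have Hm1 : ∀ k, m k = b (τ k) + n * δ k := fun k => congrFun hm1 k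
  have Hc1 : ∀ k, c k = c (τ k) + n * δ k := fun k => congrFun hc1 k
  have Hu1 : ∀ k, u k = a (σ k) + n * ε k := fun k => congrFun hu1 k
  have Hm2 : ∀ k, m k = b (σ k) + n * ε k := fun k => congrFun hm2 k
  obtain ⟨p, hσp⟩ : ∃ p, σ p = L := ⟨σ.symm L, σ.apply_symm_apply L⟩
  obtain ⟨q, hτq⟩ : ∃ q, τ q = L := ⟨τ.symm L, τ.apply_symm_apply L⟩
  by_cases hpq : p = q
  · -- the displaced position coincides: same orbit
    left
    have hτp : τ p = L := by rw [hpq]; exact hτq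
    refine ⟨σ, fun k => if k = p then δ k else ε k, funext fun k => ?_, funext fun k => ?_⟩
    · show u k = a (σ k) + n * (if k = p then δ k else ε k)
      by_cases hk : k = p
      · rw [hk, if_pos rfl, hσp]
        have e1 := Hu1 p
        have e2 := Hm2 p
        have e3 := Hm1 p
        rw [hσp] at e1 e2
        rw [hτp] at e3
        omega
      · rw [if_neg hk]
        exact Hu1 k
    · show c k = c (σ k) + n * (if k = p then δ k else ε k)
      by_cases hk : k = p
      · rw [hk, if_pos rfl, hσp]
        have e1 := Hc1 p
        rw [hτp] at e1
        omega
      · rw [if_neg hk]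
        have hkq : k ≠ q := by rw [← hpq]; exact hk
        have hσkL : σ k ≠ L := fun h => hk (σ.injective (h.trans hσp.symm))
        have hτkL : τ k ≠ L := fun h => hkq (τ.injective (h.trans hτq.symm))
        have e1 := Hc1 k
        have e2 := hbc (τ k) hτkL
        have e3 := hbc (σ k) hσkL
        have e4 := Hm1 k
        have e5 := Hm2 k
        omega
  · have hσqL : σ q ≠ L := fun h => hpq (σ.injective (hσp.trans h.symm))
    have hτpL : τ p ≠ L := fun h => hpq (τ.injective (h.trans hτq.symm))
    by_cases hD : a (σ q) = b (σ q)
    · -- the entry moved to a congruent diagonal position: same orbit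
      left
      have hbLq : b L = b (σ q) := by
        have e1 := Hm1 q
        have e2 := Hm2 q
        rw [hτq] at e1
        apply int_bounded_dvd_eq (habL ▸ (ha L).1) (habL ▸ (ha L).2)
          (hD ▸ (ha (σ q)).1) (hD ▸ (ha (σ q)).2)
        exact ⟨ε q - δ q, by rw [mul_sub]; omega⟩
      refine ⟨(Equiv.swap p q).trans σ, fun k => if k = q then δ k else ε k,
        funext fun k => ?_, funext fun k => ?_⟩
      · show u k = a (σ (Equiv.swap p q k)) + n * (if k = q then δ k else ε k)
        by_cases hk : k = p
        · rw [hk, if_neg hpq, Equiv.swap_apply_left]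
          have e1 := Hu1 p
          rw [hσp] at e1
          rw [hD, ← hbLq, ← habL]
          exact e1
        · by_cases hk' : k = q
          · rw [hk', if_pos rfl, Equiv.swap_apply_right, hσp]
            have e1 := Hu1 q
            have e2 := Hm2 q
            have e3 := Hm1 q
            rw [hτq] at e3
            omega
          · rw [if_neg hk', Equiv.swap_apply_of_ne_of_ne hk hk']
            exact Hu1 k
      · show c k = c (σ (Equiv.swap p q k)) + n * (if k = q then δ k else ε k)
        by_cases hk : k = p
        · rw [hk, if_neg hpq, Equiv.swap_apply_left]
          have e1 := Hc1 p
          have e2 := hbc (τ p) hτpL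
          have e3 := Hm1 p
          have e4 := Hm2 p
          rw [hσp] at e4
          have e5 := hbc (σ q) hσqL
          omega
        · by_cases hk' : k = q
          · rw [hk', if_pos rfl, Equiv.swap_apply_right, hσp]
            have e1 := Hc1 q
            rw [hτq] at e1
            omega
          · rw [if_neg hk', Equiv.swap_apply_of_ne_of_ne hk hk']
            have hσkL : σ k ≠ L := fun h => hk (σ.injective (h.trans hσp.symm))
            have hτkL : τ k ≠ L := fun h => hk' (τ.injective (h.trans hτq.symm))
            have e1 := Hc1 k
            have e2 := hbc (τ k) hτkL
            have e3 := hbc (σ k) hσkL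
            have e4 := Hm1 k
            have e5 := Hm2 k
            omega
    · -- strictly fewer displaced entries
      right
      have hDT : Finset.univ.filter (fun k => a k ≠ b k)
          = (Finset.univ.filter (fun k => a k ≠ c k)).erase L := by
        ext k
        simp only [Finset.mem_filter, Finset.mem_univ, true_and, Finset.mem_erase]
        constructor
        · intro h
          have hkL : k ≠ L := fun e => h (e ▸ habL)
          exact ⟨hkL, by rw [← hbc k hkL]; exact h⟩
        · rintro ⟨hkL, h⟩
          rw [hbc k hkL]; exact h
      have hLT : L ∈ Finset.univ.filter (fun k => a k ≠ c k) := by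
        simp only [Finset.mem_filter, Finset.mem_univ, true_and]; exact hst
      have hσqD : σ q ∈ Finset.univ.filter (fun k => a k ≠ b k) := by
        simp only [Finset.mem_filter, Finset.mem_univ, true_and]; exact hD
      have hsub : Finset.univ.filter (fun k => u k ≠ c k) ⊆
          insert q (((Finset.univ.filter (fun k => a k ≠ b k)).erase (σ q)).image ⇑σ.symm) := by
        intro k hk
        have hk' : u k ≠ c k := (Finset.mem_filter.1 hk).2
        by_cases hkq : k = q
        · exact hkq ▸ Finset.mem_insert_self _ _
        · apply Finset.mem_insert_of_mem
          have hτkL : τ k ≠ L := fun h => hkq (τ.injective (h.trans hτq.symm))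
          have hkp : k ≠ p := by
            intro e
            rw [e] at hk' hτkL
            have e1 := Hu1 p
            have e2 := Hm2 p
            have e3 := Hm1 p
            have e4 := Hc1 p
            have e5 := hbc (τ p) hτkL
            rw [hσp] at e1 e2
            exact hk' (by omega)
          have hσkL : σ k ≠ L := fun h => hkp (σ.injective (h.trans hσp.symm))
          have hmemD : a (σ k) ≠ b (σ k) := by
            intro e
            have e1 := Hu1 k
            have e2 := Hm2 k
            have e3 := Hm1 k
            have e4 := Hc1 k
            have e5 := hbc (τ k) hτkL
            exact hk' (by omega)
          refine Finset.mem_image.2 ⟨σ k, Finset.mem_erase.2 ⟨fun e => hkq (σ.injective e), ?_⟩,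
            σ.symm_apply_apply k⟩
          simp only [Finset.mem_filter, Finset.mem_univ, true_and]; exact hmemD
      have h1 := Finset.card_le_card hsub
      have h2 := Finset.card_insert_le q
        (((Finset.univ.filter (fun k => a k ≠ b k)).erase (σ q)).image ⇑σ.symm)
      have h3 : ((((Finset.univ.filter (fun k => a k ≠ b k)).erase (σ q)).image ⇑σ.symm)).card
          = ((Finset.univ.filter (fun k => a k ≠ b k)).erase (σ q)).card :=
        Finset.card_image_of_injective _ σ.symm.injective
      have h4 : ((Finset.univ.filter (fun k => a k ≠ b k)).erase (σ q)).card
          = (Finset.univ.filter (fun k => a k ≠ b k)).card - 1 :=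
        Finset.card_erase_of_mem hσqD
      have h5 : (Finset.univ.filter (fun k => a k ≠ b k)).card
          = (Finset.univ.filter (fun k => a k ≠ c k)).card - 1 := by
        rw [hDT]; exact Finset.card_erase_of_mem hLT
      have h6 : 0 < (Finset.univ.filter (fun k => a k ≠ c k)).card :=
        Finset.card_pos.2 ⟨L, hLT⟩
      have h7 : 0 < (Finset.univ.filter (fun k => a k ≠ b k)).card :=
        Finset.card_pos.2 ⟨σ q, hσqD⟩
      omega

end Key

section Main

variable {n r : ℕ}

/-- the generating set -/
def Yset (K : Type*) [Field K] (n r : ℕ) : Set (Module.End K (TensorSpace K r)) :=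
  {f : Module.End K (TensorSpace K r) |
    ∃ (i : Fin (r - 1) → ℤ) (s t : ℤ),
      (∀ k, 1 ≤ i k ∧ i k ≤ (n : ℤ)) ∧ 1 ≤ s ∧ s ≤ (n : ℤ) ∧
      f = xi K n r (app r i s) (app r i t)}

lemma ndiag_pairRel {u w u' w' : Fin r → ℤ} (h : pairRel n r u w u' w') :
    (Finset.univ.filter fun k => u' k ≠ w' k).card
      = (Finset.univ.filter fun k => u k ≠ w k).card := by
  obtain ⟨σ, ε, rfl, rfl⟩ := h
  apply Finset.card_bij (fun k _ => σ k)
  · intro k hk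
    simp only [Finset.mem_filter, Finset.mem_univ, true_and] at hk ⊢
    intro e
    apply hk
    show u (σ k) + n * ε k = w (σ k) + n * ε k
    omega
  · intro x hx y hy e
    exact σ.injective e
  · intro k hk
    simp only [Finset.mem_filter, Finset.mem_univ, true_and] at hk
    refine ⟨σ.symm k, ?_, σ.apply_symm_apply k⟩
    simp only [Finset.mem_filter, Finset.mem_univ, true_and]
    intro e
    apply hk
    have : u (σ (σ.symm k)) + n * ε (σ.symm k) = w (σ (σ.symm k)) + n * ε (σ.symm k) := e
    rw [σ.apply_symm_apply] at this
    omega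

lemma app_apply_lt (i₀ : Fin (r-1) → ℤ) (z : ℤ) (k : Fin r) (h : (k:ℕ) < r - 1) :
    app r i₀ z k = i₀ ⟨k, h⟩ := dif_pos h

lemma app_apply_not_lt (i₀ : Fin (r-1) → ℤ) (z : ℤ) (k : Fin r) (h : ¬ (k:ℕ) < r - 1) :
    app r i₀ z k = z := dif_neg h

lemma app_eq_self (L : Fin r) (hL : (L : ℕ) = r - 1) (a : Fin r → ℤ) :
    app r (fun k : Fin (r-1) => a ⟨k.1, by omega⟩) (a L) = a := by
  funext k
  by_cases h : (k:ℕ) < r - 1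
  · rw [app_apply_lt _ _ _ h]
  · rw [app_apply_not_lt _ _ _ h]
    have hk := k.2
    exact congrArg a (Fin.ext (by omega))

lemma xi_app_mem_Y {K : Type*} [Field K] (hn : 1 ≤ n) (j₀ : Fin (r-1) → ℤ) {s : ℤ}
    (hs1 : 1 ≤ s) (hs2 : s ≤ (n:ℤ)) (t : ℤ) :
    xi K n r (app r j₀ s) (app r j₀ t) ∈ Yset K n r := by
  refine ⟨fun k => cnorm n (j₀ k), s, t, fun k => (cnorm_spec hn (j₀ k)).2, hs1, hs2, ?_⟩
  have h1 : ∀ z : ℤ, act n r 1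
      (fun k => if h : (k:ℕ) < r - 1 then (cnorm n (j₀ ⟨k,h⟩) - j₀ ⟨k,h⟩)/n else 0)
      (app r j₀ z) = app r (fun k => cnorm n (j₀ k)) z := by
    intro z
    funext k
    show app r j₀ z ((1 : Equiv.Perm (Fin r)) k)
        + (n:ℤ) * (if h : (k:ℕ) < r - 1 then (cnorm n (j₀ ⟨k,h⟩) - j₀ ⟨k,h⟩)/n else 0)
      = app r (fun k => cnorm n (j₀ k)) z k
    rw [Equiv.Perm.one_apply]
    by_cases h : (k:ℕ) < r - 1
    · rw [dif_pos h, app_apply_lt _ _ _ h, app_apply_lt _ _ _ h,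
        Int.mul_ediv_cancel' (cnorm_spec hn _).1]
      ring
    · rw [dif_neg h, app_apply_not_lt _ _ _ h, app_apply_not_lt _ _ _ h]
      ring
  rw [← h1 s, ← h1 t, xi_act_pair]

set_option maxHeartbeats 1000000 in
lemma xi_mem_adjoin {K : Type*} [Field K] [CharZero K] (hn : 1 ≤ n) (hr : 1 ≤ r)
    (u w : Fin r → ℤ) :
    xi K n r u w ∈ Algebra.adjoin K (Yset K n r) := by
  classical
  haveI : Fintype (Quotient (sd n r)) := @Fintype.ofFinite _ (finite_quot hn)
  suffices H : ∀ d (u w : Fin r → ℤ),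
      (Finset.univ.filter fun k => u k ≠ w k).card = d →
      xi K n r u w ∈ Algebra.adjoin K (Yset K n r) from H _ u w rfl
  intro d
  induction d using Nat.strong_induction_on with
  | _ d IH =>
  intro u w hd
  have hL : ((⟨r - 1, by omega⟩ : Fin r) : ℕ) = r - 1 := rfl
  set L : Fin r := ⟨r - 1, by omega⟩ with hLdef
  rcases Nat.eq_zero_or_pos d with hd0 | hdpos
  · -- diagonal case
    subst hd0
    have huw : u = w := by
      funext k
      by_contra hne
      have hmem : k ∈ Finset.univ.filter (fun k => u k ≠ w k) := by
        simp only [Finset.mem_filter, Finset.mem_univ, true_and]; exact hne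
      rw [Finset.card_eq_zero.1 hd] at hmem
      exact absurd hmem (Finset.notMem_empty k)
    subst huw
    obtain ⟨ε, hε⟩ := act_cnorm hn (1 : Equiv.Perm (Fin r)) u
    rw [← xi_act_pair 1 ε u u, hε]
    set a : Fin r → ℤ := fun k => cnorm n (u ((1 : Equiv.Perm (Fin r)) k)) with hadef
    have ha : ∀ k, 1 ≤ a k ∧ a k ≤ (n:ℤ) := fun k => (cnorm_spec hn _).2
    obtain ⟨i₀, hi₀⟩ : ∃ i₀, app r i₀ (a L) = a := ⟨_, app_eq_self L hL a⟩
    apply Algebra.subset_adjoin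
    refine ⟨i₀, a L, a L, ?_, (ha L).1, (ha L).2, by rw [hi₀]⟩
    intro k
    have hk2 := k.2
    have h2 : i₀ k = a ⟨k.1, by omega⟩ := by
      have h3 := congrFun hi₀ (⟨k.1, by omega⟩ : Fin r)
      rw [app_apply_lt _ _ _ (show ((⟨k.1, by omega⟩ : Fin r) : ℕ) < r - 1 from k.2)] at h3
      exact (congrArg i₀ (Fin.ext rfl)).trans h3
    rw [h2]
    exact ha _
  · -- there is a displaced entry
    obtain ⟨k₀, hk₀⟩ : ∃ k₀, u k₀ ≠ w k₀ := by
      obtain ⟨k₀, hk₀⟩ := Finset.card_pos.1 (hd ▸ hdpos)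
      exact ⟨k₀, (Finset.mem_filter.1 hk₀).2⟩
    obtain ⟨ε₀, hε₀⟩ := act_cnorm hn (Equiv.swap L k₀) u
    set a := act n r (Equiv.swap L k₀) ε₀ u with hadef
    set c := act n r (Equiv.swap L k₀) ε₀ w with hcdef
    have hpr : pairRel n r u w a c := ⟨_, _, rfl, rfl⟩
    have ha : ∀ k, 1 ≤ a k ∧ a k ≤ (n:ℤ) := by
      rw [hε₀]; exact fun k => (cnorm_spec hn _).2
    have hdac : (Finset.univ.filter fun k => a k ≠ c k).card = d := by
      rw [ndiag_pairRel hpr, hd]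
    have hstL : a L ≠ c L := by
      rw [hadef, hcdef]
      show u (Equiv.swap L k₀ L) + (n:ℤ) * ε₀ L ≠ w (Equiv.swap L k₀ L) + n * ε₀ L
      rw [Equiv.swap_apply_left]
      intro hh
      exact hk₀ (by omega)
    obtain ⟨j₀, hj₀⟩ : ∃ j₀, app r j₀ (c L) = c := ⟨_, app_eq_self L hL c⟩
    set b := app r j₀ (a L) with hbdef
    have hbL : b L = a L := app_apply_not_lt _ _ _ (by omega)
    have hbc' : ∀ k, k ≠ L → b k = c k := by
      intro k hk
      have hklt : (k:ℕ) < r - 1 := by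
        have h1 := k.2
        have h2 : (k:ℕ) ≠ r - 1 := fun h => hk (Fin.ext h)
        omega
      rw [hbdef, ← hj₀, app_apply_lt _ _ _ hklt, app_apply_lt _ _ _ hklt]
    have hdab : (Finset.univ.filter fun k => a k ≠ b k).card = d - 1 := by
      have hDT : Finset.univ.filter (fun k => a k ≠ b k)
          = (Finset.univ.filter (fun k => a k ≠ c k)).erase L := by
        ext k
        simp only [Finset.mem_filter, Finset.mem_univ, true_and, Finset.mem_erase]
        constructor
        · intro h
          have hkL : k ≠ L := fun e => h (by rw [e, hbL])
          exact ⟨hkL, by rw [← hbc' k hkL]; exact h⟩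
        · rintro ⟨hkL, h⟩
          rw [hbc' k hkL]; exact h
      rw [hDT, Finset.card_erase_of_mem
        (by simp only [Finset.mem_filter, Finset.mem_univ, true_and]; exact hstL), hdac]
    have hW : xi K n r a b ∈ Algebra.adjoin K (Yset K n r) :=
      IH (d-1) (by omega) a b hdab
    have hG : xi K n r b c ∈ Algebra.adjoin K (Yset K n r) := by
      apply Algebra.subset_adjoin
      have hmem := xi_app_mem_Y (K := K) hn j₀ (ha L).1 (ha L).2 (c L)
      rw [hj₀, ← hbdef] at hmem
      exact hmem
    set f := xi K n r a b * xi K n r b c with hfdef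
    have hfA : f ∈ Algebra.adjoin K (Yset K n r) := mul_mem hW hG
    have hfC : f ∈ affineSchur K n r :=
      mul_mem (xi_mem_affineSchur a b) (xi_mem_affineSchur b c)
    have hcoeff : ∀ (ρ k : Fin r → ℤ), (f (Finsupp.single ρ (1:K))) k
        = (((xiSupport n r b c ρ).filter fun m => k ∈ xiSupport n r a b m).card : K) := by
      intro ρ k
      rw [hfdef, Module.End.mul_apply, xi_single, one_smul, map_sum, Finsupp.finset_sum_apply]
      rw [Finset.sum_congr rfl fun m _ => xi_single_apply a b m k]
      simp [Finset.sum_boole]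
    have hkey : ∀ (q : Quotient (sd n r)) i',
        i' ∈ (f (Finsupp.single (Quotient.out q) (1:K))).support →
        pairRel n r i' (Quotient.out q) a c ∨
          (Finset.univ.filter fun k => i' k ≠ (Quotient.out q) k).card < d := by
      intro q i' hi'
      obtain ⟨m, hmmem, hi'mem⟩ : ∃ m ∈ xiSupport n r b c (Quotient.out q),
          i' ∈ xiSupport n r a b m := by
        have h0 := Finsupp.mem_support_iff.1 hi'
        rw [hcoeff] at h0
        have hcard : ((xiSupport n r b c (Quotient.out q)).filter
            fun m => i' ∈ xiSupport n r a b m).card ≠ 0 :=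
          fun h => h0 (by rw [h, Nat.cast_zero])
        obtain ⟨m, hm⟩ := Finset.card_pos.1 (Nat.pos_of_ne_zero hcard)
        exact ⟨m, (Finset.mem_filter.1 hm).1, (Finset.mem_filter.1 hm).2⟩
      obtain ⟨σg, εg, hmg, hρg⟩ := mem_xiSupport_iff.1 hmmem
      have hP1 : pairRel n r b c m (Quotient.out q) := ⟨σg, εg, hmg, hρg⟩
      have hP2 : pairRel n r m (Quotient.out q) (act n r σg.symm (invε σg εg) m) c := by
        refine ⟨σg.symm, invε σg εg, rfl, ?_⟩
        rw [hρg, act_inv_act]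
      have hm0 : act n r σg.symm (invε σg εg) m ∈ xiSupport n r b c c :=
        mem_xiSupport_iff_pairRel.2 (pairRel_trans hP1 hP2)
      have hP3 : pairRel n r a b i' m := mem_xiSupport_iff_pairRel.1 hi'mem
      have hP4 : pairRel n r i' m (act n r σg.symm (invε σg εg) i')
          (act n r σg.symm (invε σg εg) m) := ⟨σg.symm, invε σg εg, rfl, rfl⟩
      have hu0 : act n r σg.symm (invε σg εg) i'
          ∈ xiSupport n r a b (act n r σg.symm (invε σg εg) m) :=
        mem_xiSupport_iff_pairRel.2 (pairRel_trans hP3 hP4)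
      have hback : pairRel n r (act n r σg.symm (invε σg εg) i') c i' (Quotient.out q) := by
        refine ⟨σg, εg, ?_, hρg⟩
        rw [act_act_inv]
      rcases key_lemma ha hbL.symm hbc' hstL hm0 hu0 with hcase | hcase
      · left; exact pairRel_symm (pairRel_trans hcase hback)
      · right
        rw [ndiag_pairRel hback, ← hdac]
        exact hcase
    have hsplit : f = (∑ q : Quotient (sd n r),
          ∑ i' ∈ (f (Finsupp.single (Quotient.out q) (1:K))).support.filter
            (fun i' => pairRel n r i' (Quotient.out q) a c),
            ((f (Finsupp.single (Quotient.out q) 1)) i'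
              / ((xiSupport n r i' (Quotient.out q) (Quotient.out q)).card : K)))
        • xi K n r a c
        + ∑ q : Quotient (sd n r),
            ∑ i' ∈ (f (Finsupp.single (Quotient.out q) (1:K))).support.filter
              (fun i' => ¬ pairRel n r i' (Quotient.out q) a c),
              ((f (Finsupp.single (Quotient.out q) 1)) i'
                / ((xiSupport n r i' (Quotient.out q) (Quotient.out q)).card : K))
                • xi K n r i' (Quotient.out q) := by
      conv_lhs => rw [← decomp_spec hfC]
      rw [decomp, Finset.sum_smul, ← Finset.sum_add_distrib]
      apply Finset.sum_congr rfl
      intro q _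
      conv_lhs => rw [← Finset.sum_filter_add_sum_filter_not
        ((f (Finsupp.single (Quotient.out q) (1:K))).support)
        (fun i' => pairRel n r i' (Quotient.out q) a c)]
      congr 1
      rw [Finset.sum_smul]
      apply Finset.sum_congr rfl
      intro i' hi'
      rw [← xi_eq_of_pairRel (Finset.mem_filter.1 hi').2]
    set lam := ∑ q : Quotient (sd n r),
          ∑ i' ∈ (f (Finsupp.single (Quotient.out q) (1:K))).support.filter
            (fun i' => pairRel n r i' (Quotient.out q) a c),
            ((f (Finsupp.single (Quotient.out q) 1)) i'
              / ((xiSupport n r i' (Quotient.out q) (Quotient.out q)).card : K)) with hlamdef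
    set E := ∑ q : Quotient (sd n r),
            ∑ i' ∈ (f (Finsupp.single (Quotient.out q) (1:K))).support.filter
              (fun i' => ¬ pairRel n r i' (Quotient.out q) a c),
              ((f (Finsupp.single (Quotient.out q) 1)) i'
                / ((xiSupport n r i' (Quotient.out q) (Quotient.out q)).card : K))
                • xi K n r i' (Quotient.out q) with hEdef
    have hE0 : (E (Finsupp.single c (1:K))) a = 0 := by
      rw [hEdef, LinearMap.sum_apply, Finsupp.finset_sum_apply]
      apply Finset.sum_eq_zero
      intro q _
      rw [LinearMap.sum_apply, Finsupp.finset_sum_apply]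
      apply Finset.sum_eq_zero
      intro i' hi'
      rw [LinearMap.smul_apply, Finsupp.smul_apply, xi_single_apply, smul_eq_mul, if_neg, mul_zero]
      intro hmem
      exact (Finset.mem_filter.1 hi').2 (mem_xiSupport_iff_pairRel.1 hmem)
    have hlam0 : lam ≠ 0 := by
      have happly := congrArg
        (fun (g : Module.End K (TensorSpace K r)) => (g (Finsupp.single c (1:K))) a) hsplit
      simp only [LinearMap.add_apply, Finsupp.add_apply, LinearMap.smul_apply,
        Finsupp.smul_apply] at happly
      rw [hE0, hcoeff c a, xi_single_apply, if_pos (self_mem_xiSupport a c), smul_eq_mul,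
        mul_one, add_zero] at happly
      rw [← happly]
      rw [Nat.cast_ne_zero]
      apply Finset.card_ne_zero_of_mem (a := b)
      exact Finset.mem_filter.2 ⟨self_mem_xiSupport b c, self_mem_xiSupport a b⟩
    have hEA : E ∈ Algebra.adjoin K (Yset K n r) := by
      rw [hEdef]
      apply Subalgebra.sum_mem
      intro q _
      apply Subalgebra.sum_mem
      intro i' hi'
      apply Subalgebra.smul_mem
      rcases hkey q i' (Finset.mem_filter.1 hi').1 with hcase | hcase
      · exact absurd hcase (Finset.mem_filter.1 hi').2
      · exact IH _ hcase i' (Quotient.out q) rfl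
    set E' := ∑ q : Quotient (sd n r),
            ∑ i' ∈ (f (Finsupp.single (Quotient.out q) (1:K))).support.filter
              (fun i' => ¬ pairRel n r i' (Quotient.out q) a c),
              (-((f (Finsupp.single (Quotient.out q) 1)) i'
                / ((xiSupport n r i' (Quotient.out q) (Quotient.out q)).card : K)))
                • xi K n r i' (Quotient.out q) with hE'def
    have hE'A : E' ∈ Algebra.adjoin K (Yset K n r) := by
      rw [hE'def]
      apply Subalgebra.sum_mem
      intro q _
      apply Subalgebra.sum_mem
      intro i' hi'
      apply Subalgebra.smul_mem
      rcases hkey q i' (Finset.mem_filter.1 hi').1 with hcase | hcase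
      · exact absurd hcase (Finset.mem_filter.1 hi').2
      · exact IH _ hcase i' (Quotient.out q) rfl
    have hsum : E + E' = 0 := by
      rw [hEdef, hE'def, ← Finset.sum_add_distrib]
      apply Finset.sum_eq_zero; intro q _
      rw [← Finset.sum_add_distrib]
      apply Finset.sum_eq_zero; intro i' _
      rw [← add_smul]
      simp
    have hxiac : xi K n r a c ∈ Algebra.adjoin K (Yset K n r) := by
      have h1 : lam • xi K n r a c = f + E' := by rw [hsplit, add_assoc, hsum, add_zero]
      have h2 : lam • xi K n r a c ∈ Algebra.adjoin K (Yset K n r) := by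
        rw [h1]; exact add_mem hfA hE'A
      have h3 := Subalgebra.smul_mem _ h2 lam⁻¹
      rwa [inv_smul_smul₀ hlam0] at h3
    rw [← xi_eq_of_pairRel hpr]
    exact hxiac

end Main

/-- over a field of characteristic 0, for n ≥ 2, r ≥ 1, the unital
K-subalgebra of End_K(Ẽ^{⊗r}) generated by
Y = {ξ_{i⌢s, i⌢t} : i ∈ I(n,r−1), s ∈ {1,…,n}, t ∈ ℤ} equals the centralizer algebra
End_{KΣ̂_r}(Ẽ^{⊗r}) (the affine Schur algebra S̃(n,r)). -/
theorem adjoin_Y_eq_affineSchur (K : Type*) [Field K] [CharZero K]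
    (n r : ℕ) (hn : 2 ≤ n) (hr : 1 ≤ r) :
    Algebra.adjoin K
      {f : Module.End K (TensorSpace K r) |
        ∃ (i : Fin (r - 1) → ℤ) (s t : ℤ),
          (∀ k, 1 ≤ i k ∧ i k ≤ (n : ℤ)) ∧ 1 ≤ s ∧ s ≤ (n : ℤ) ∧
          f = xi K n r (app r i s) (app r i t)}
    = affineSchur K n r := by
  have hn1 : 1 ≤ n := by omega
  apply le_antisymm
  · apply Algebra.adjoin_le
    rintro f ⟨i, s, t, hi, hs1, hs2, rfl⟩
    exact xi_mem_affineSchur _ _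
  · intro f hf
    haveI : Fintype (Quotient (sd n r)) := @Fintype.ofFinite _ (finite_quot hn1)
    rw [← decomp_spec hf]
    apply Subalgebra.sum_mem
    intro q _
    apply Subalgebra.sum_mem
    intro i' _
    apply Subalgebra.smul_mem
    exact xi_mem_adjoin hn1 hr i' (Quotient.out q)

end AffineSchur
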